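/- On the interval Ω = (−1,1) ⊂ ℝ, the functions u₁(x) = 0 and u₂(x) = ½x² − ½ are both viscosity solutions of (u')²u'' − |u'|² = 0 on (−1,1) with u₁(−1) = u₁(1) = u₂(−1) = u₂(1) = 0, and u₁ ≠ u₂. Hence the Dirichlet problem for the Aronsson equation Δ∞u − |Du|² = 0 may have more than one viscosity solution with prescribed boundary values. -/

import Mathlib

/-!
Both functions are classical `C²` solutions: `u₁' = 0`, and `u₂' = x`, `u₂'' = 1` give
`x² · 1 - x² = 0`. A classical solution is a viscosity solution because at a local maximum of
`u - φ` the first and second order conditions give `φ' = u'` and `φ'' ≥ u''`, and the operator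
`p² X - |p|²` is nondecreasing in `X` (dually at a local minimum).
-/

open Set MeasureTheory

noncomputable section

/-- `u` is a viscosity subsolution of `(u')²u'' - |u'|² = 0` on `Ω ⊆ ℝ`. -/
def IsSubsol1 (Ω : Set ℝ) (u : ℝ → ℝ) : Prop :=
  ∀ φ : ℝ → ℝ, ContDiff ℝ 2 φ → ∀ x₀ ∈ Ω,
    IsLocalMaxOn (fun x => u x - φ x) Ω x₀ →
    (deriv φ x₀) ^ 2 * deriv (deriv φ) x₀ - |deriv φ x₀| ^ 2 ≥ 0

/-- `u` is a viscosity supersolution of `(u')²u'' - |u'|² = 0` on `Ω ⊆ ℝ`. -/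
def IsSupersol1 (Ω : Set ℝ) (u : ℝ → ℝ) : Prop :=
  ∀ φ : ℝ → ℝ, ContDiff ℝ 2 φ → ∀ x₀ ∈ Ω,
    IsLocalMinOn (fun x => u x - φ x) Ω x₀ →
    (deriv φ x₀) ^ 2 * deriv (deriv φ) x₀ - |deriv φ x₀| ^ 2 ≤ 0

/-- `u` is a viscosity solution of `(u')²u'' - |u'|² = 0` on `Ω ⊆ ℝ`. -/
def IsSol1 (Ω : Set ℝ) (u : ℝ → ℝ) : Prop :=
  IsSubsol1 Ω u ∧ IsSupersol1 Ω u

/-- `u` is an absolute minimizer for the Hamiltonian `H = H(p, z)` on `Ω ⊆ ℝ`. -/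
def IsAbsMin1 (H : ℝ → ℝ → ℝ) (Ω : Set ℝ) (u : ℝ → ℝ) : Prop :=
  ∀ V : Set ℝ, IsOpen V → closure V ⊆ Ω →
    ∀ v : ℝ → ℝ, (∃ K : NNReal, LipschitzOnWith K v (closure V)) →
      (∀ x ∈ frontier V, v x = u x) →
      essSup (fun x => H (deriv u x) (u x)) (volume.restrict V) ≤
        essSup (fun x => H (deriv v x) (v x)) (volume.restrict V)

open Filter Topology SignType

theorem IsLocalMax.deriv_deriv_nonpos {f : ℝ → ℝ} {a : ℝ}
    (hf : ∀ᶠ x in 𝓝 a, DifferentiableAt ℝ f x) (h : IsLocalMax f a) :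
    deriv (deriv f) a ≤ 0 := by
  by_contra! hpos
  -- `f'' a > 0` and `f' a = 0` make `f'` positive just right of `a`, so by the mean value
  -- theorem `f` increases there, against the maximum at `a`.
  have hsign := eventually_nhdsWithin_sign_eq_of_deriv_pos hpos h.deriv_eq_zero
  obtain ⟨b, hab, hb⟩ := nhdsGE_basis_Icc.eventually_iff.mp
    (nhdsWithin_le_nhds (hf.and (h.and hsign)))
  obtain ⟨ξ, hξ, hslope⟩ := exists_deriv_eq_slope f hab
    (fun x hx => (hb hx).1.continuousAt.continuousWithinAt)
    (fun x hx => (hb (Ioo_subset_Icc_self hx)).1.differentiableWithinAt)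
  have hderiv_pos : 0 < deriv f ξ := by
    have := (hb (Ioo_subset_Icc_self hξ)).2.2
    rwa [sign_pos (sub_pos.mpr hξ.1), sign_eq_one_iff] at this
  have hslope_nonpos : (f b - f a) / (b - a) ≤ 0 :=
    div_nonpos_of_nonpos_of_nonneg (sub_nonpos.mpr (hb (right_mem_Icc.mpr hab.le)).2.1)
      (sub_nonneg.mpr hab.le)
  linarith

theorem deriv_eq_and_deriv_deriv_le_of_isLocalMax_sub {u φ : ℝ → ℝ} {x₀ : ℝ}
    (hu : ContDiff ℝ 2 u) (hφ : ContDiff ℝ 2 φ) (h : IsLocalMax (fun x => u x - φ x) x₀) :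
    deriv φ x₀ = deriv u x₀ ∧ deriv (deriv u) x₀ ≤ deriv (deriv φ) x₀ := by
  have hu₁ := hu.differentiable two_ne_zero
  have hφ₁ := hφ.differentiable two_ne_zero
  have hderiv : deriv (fun x => u x - φ x) = fun x => deriv u x - deriv φ x :=
    funext fun x => deriv_fun_sub (hu₁ x) (hφ₁ x)
  have hcrit := h.deriv_eq_zero
  have hsecond : deriv (deriv (fun x => u x - φ x)) x₀ ≤ 0 :=
    h.deriv_deriv_nonpos (.of_forall fun x => (hu₁ x).sub (hφ₁ x))
  rw [hderiv] at hcrit hsecond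
  rw [deriv_fun_sub (hu.differentiable_deriv_two x₀) (hφ.differentiable_deriv_two x₀)] at hsecond
  constructor <;> linarith

theorem isSubsol1_of_contDiff {Ω : Set ℝ} (hΩ : IsOpen Ω) {u : ℝ → ℝ} (hu : ContDiff ℝ 2 u)
    (hsub : ∀ x ∈ Ω, 0 ≤ deriv u x ^ 2 * deriv (deriv u) x - |deriv u x| ^ 2) :
    IsSubsol1 Ω u := by
  intro φ hφ x₀ hx₀ hmax
  obtain ⟨hfirst, hsecond⟩ :=
    deriv_eq_and_deriv_deriv_le_of_isLocalMax_sub hu hφ (hmax.isLocalMax (hΩ.mem_nhds hx₀))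
  rw [hfirst]
  nlinarith [hsub x₀ hx₀, mul_le_mul_of_nonneg_left hsecond (sq_nonneg (deriv u x₀))]

theorem isSupersol1_of_contDiff {Ω : Set ℝ} (hΩ : IsOpen Ω) {u : ℝ → ℝ} (hu : ContDiff ℝ 2 u)
    (hsuper : ∀ x ∈ Ω, deriv u x ^ 2 * deriv (deriv u) x - |deriv u x| ^ 2 ≤ 0) :
    IsSupersol1 Ω u := by
  intro φ hφ x₀ hx₀ hmin
  have hmax : IsLocalMax (fun x => φ x - u x) x₀ := by
    simpa only [neg_sub] using (hmin.isLocalMin (hΩ.mem_nhds hx₀)).neg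
  obtain ⟨hfirst, hsecond⟩ := deriv_eq_and_deriv_deriv_le_of_isLocalMax_sub hφ hu hmax
  rw [← hfirst]
  nlinarith [hsuper x₀ hx₀, mul_le_mul_of_nonneg_left hsecond (sq_nonneg (deriv u x₀))]

theorem isSol1_of_contDiff {Ω : Set ℝ} (hΩ : IsOpen Ω) {u : ℝ → ℝ} (hu : ContDiff ℝ 2 u)
    (hsol : ∀ x ∈ Ω, deriv u x ^ 2 * deriv (deriv u) x - |deriv u x| ^ 2 = 0) :
    IsSol1 Ω u :=
  ⟨isSubsol1_of_contDiff hΩ hu fun x hx => (hsol x hx).ge,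
    isSupersol1_of_contDiff hΩ hu fun x hx => (hsol x hx).le⟩

/-- Example I: `u₁ = 0` and `u₂ = ½x² - ½` are two distinct viscosity
solutions of `(u')²u'' - |u'|² = 0` on `(-1,1)` both vanishing at `±1`; hence the
Dirichlet problem for this Aronsson equation can have more than one solution. -/
theorem example_two_solutions :
    IsSol1 (Set.Ioo (-1 : ℝ) 1) (fun _ => (0 : ℝ)) ∧
    IsSol1 (Set.Ioo (-1 : ℝ) 1) (fun x => (1 / 2) * x ^ 2 - 1 / 2) ∧
    (fun _ : ℝ => (0 : ℝ)) (-1) = 0 ∧ (fun _ : ℝ => (0 : ℝ)) 1 = 0 ∧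
    (fun x : ℝ => (1 / 2) * x ^ 2 - 1 / 2) (-1) = 0 ∧
    (fun x : ℝ => (1 / 2) * x ^ 2 - 1 / 2) 1 = 0 ∧
    ∃ x ∈ Set.Ioo (-1 : ℝ) 1,
      (fun _ : ℝ => (0 : ℝ)) x ≠ (fun x : ℝ => (1 / 2) * x ^ 2 - 1 / 2) x := by
  refine ⟨isSol1_of_contDiff isOpen_Ioo contDiff_const fun x _ => by simp,
    isSol1_of_contDiff isOpen_Ioo (by fun_prop) fun x _ => by simp,
    by norm_num, by norm_num, by norm_num, by norm_num, 0, by norm_num, by norm_num⟩
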